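/- arXiv:math/0007206 — 7 statements merged into one kernel-verified Lean document; each statement's English description precedes it below -/
import Mathlib

section
/- Along any differentiable solution of the Euler–Poisson equations of the toy top (i.e. curves ω, r with m′ = ω×m + DL and r′ = ω×r), the quantity l := ⟨m, k⟩ is a first integral: its time derivative vanishes identically, so l is constant. -/
open scoped RealInnerProductSpace

/-- Cross product on `EuclideanSpace ℝ (Fin 3)`. -/
noncomputable def cross3 (x y : EuclideanSpace ℝ (Fin 3)) : EuclideanSpace ℝ (Fin 3) :=
  WithLp.toLp 2 (![x 1 * y 2 - x 2 * y 1, x 2 * y 0 - x 0 * y 2, x 0 * y 1 - x 1 * y 0] : Fin 3 → ℝ)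

/-- The vertical unit vector `k = (0,0,1)`. -/
noncomputable def kvec : EuclideanSpace ℝ (Fin 3) := WithLp.toLp 2 (![0, 0, 1] : Fin 3 → ℝ)

/-! Since `m'` is given by the equations of motion, `l' = ⟨ω × m + DL, k⟩` is pointwise
algebra. In `ω × m + DL` the `A`-term vanishes, the `(C - A)`-terms cancel by antisymmetry, and the
Jacobi identity turns the two `p s`-terms into a multiple of `k × (ω × r)`; what remains,
`p (r × k)` included, is orthogonal to `k`. -/

open scoped Matrix

local notation "E³" => EuclideanSpace ℝ (Fin 3)

lemma cross3_eq_crossProduct (x y : E³) :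
    cross3 x y = WithLp.toLp 2 (WithLp.ofLp x ⨯₃ WithLp.ofLp y) := by
  rw [cross_apply]; rfl

lemma cross3_add_right (x y z : E³) : cross3 x (y + z) = cross3 x y + cross3 x z := by
  simp only [cross3_eq_crossProduct, WithLp.ofLp_add, map_add, WithLp.toLp_add]

lemma cross3_smul_right (a : ℝ) (x y : E³) : cross3 x (a • y) = a • cross3 x y := by
  simp only [cross3_eq_crossProduct, WithLp.ofLp_smul, map_smul, WithLp.toLp_smul]

lemma cross3_self (x : E³) : cross3 x x = 0 := by
  simp [cross3_eq_crossProduct]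

lemma cross3_anticomm (x y : E³) : cross3 y x = -cross3 x y := by
  rw [cross3_eq_crossProduct, cross3_eq_crossProduct, ← cross_anticomm, WithLp.toLp_neg]

lemma cross3_jacobi (x y z : E³) :
    cross3 x (cross3 y z) + cross3 y (cross3 z x) + cross3 z (cross3 x y) = 0 := by
  simp only [cross3_eq_crossProduct, ← WithLp.toLp_add, jacobi_cross, WithLp.toLp_zero]

lemma inner_cross3_self_left (x y : E³) : ⟪cross3 x y, x⟫ = 0 := by
  simp [EuclideanSpace.inner_eq_star_dotProduct, cross3_eq_crossProduct, dot_self_cross]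

lemma inner_cross3_self_right (x y : E³) : ⟪cross3 x y, y⟫ = 0 := by
  simp [EuclideanSpace.inner_eq_star_dotProduct, cross3_eq_crossProduct, dot_cross_self]

noncomputable def toyTopMomentum (A C p s : ℝ) (w r : E³) : E³ :=
  A • w + ((C - A) * ⟪w, r⟫) • r + (p * s * ⟪cross3 r kvec, w⟫) • cross3 r kvec

noncomputable def toyTopDL (A C p s : ℝ) (w r : E³) : E³ :=
  ((C - A) * ⟪w, r⟫) • cross3 r w + (p * s * ⟪cross3 r kvec, w⟫) • cross3 r (cross3 kvec w)
    + p • cross3 r kvec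

lemma cross3_toyTopMomentum_add_toyTopDL (A C p s : ℝ) (w r : E³) :
    cross3 w (toyTopMomentum A C p s w r) + toyTopDL A C p s w r
      = p • cross3 r kvec - (p * s * ⟪cross3 r kvec, w⟫) • cross3 kvec (cross3 w r) := by
  have jacobi := cross3_jacobi w r kvec
  simp only [toyTopMomentum, toyTopDL, cross3_add_right, cross3_smul_right, cross3_self,
    cross3_anticomm w r]
  linear_combination (norm := module) (p * s * ⟪cross3 r kvec, w⟫) • jacobi

lemma inner_cross3_toyTopMomentum_add_toyTopDL_kvec (A C p s : ℝ) (w r : E³) :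
    ⟪cross3 w (toyTopMomentum A C p s w r) + toyTopDL A C p s w r, kvec⟫ = 0 := by
  rw [cross3_toyTopMomentum_add_toyTopDL, inner_sub_left, inner_smul_left, inner_smul_left,
    inner_cross3_self_right, inner_cross3_self_left, mul_zero, mul_zero, sub_zero]

lemma deriv_inner_const_right {E : Type*} [NormedAddCommGroup E] [InnerProductSpace ℝ E]
    {f : ℝ → E} {t : ℝ} (hf : DifferentiableAt ℝ f t) (v : E) :
    deriv (fun t => ⟪f t, v⟫) t = ⟪deriv f t, v⟫ := by
  rw [deriv_inner_apply ℝ hf (differentiableAt_const v), deriv_const, inner_zero_right, zero_add]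

theorem toyTop_l_first_integral_general
    (A C p s : ℝ)
    (ω r : ℝ → EuclideanSpace ℝ (Fin 3))
    (m DL : ℝ → EuclideanSpace ℝ (Fin 3))
    (hm : ∀ t, m t = A • ω t + ((C - A) * ⟪ω t, r t⟫) • r t
        + (p * s * ⟪cross3 (r t) kvec, ω t⟫) • cross3 (r t) kvec)
    (hDL : ∀ t, DL t = ((C - A) * ⟪ω t, r t⟫) • cross3 (r t) (ω t)
        + (p * s * ⟪cross3 (r t) kvec, ω t⟫) • cross3 (r t) (cross3 kvec (ω t))
        + p • cross3 (r t) kvec)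
    (hmdiff : Differentiable ℝ m)
    (heqm : ∀ t, deriv m t = cross3 (ω t) (m t) + DL t) :
    (∀ t, deriv (fun t => ⟪m t, kvec⟫) t = 0) ∧
      ∀ t₁ t₂, ⟪m t₁, kvec⟫ = ⟪m t₂, kvec⟫ := by
  have hl : ∀ t, deriv (fun t => ⟪m t, kvec⟫) t = 0 := fun t => by
    rw [deriv_inner_const_right (hmdiff t), heqm t, hm t, hDL t]
    exact inner_cross3_toyTopMomentum_add_toyTopDL_kvec A C p s (ω t) (r t)
  exact ⟨hl, is_const_of_deriv_eq_zero (hmdiff.inner ℝ (differentiable_const kvec)) hl⟩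

/-- Along any solution of the Euler–Poisson equations of the toy top, the quantity
`l = ⟨m, k⟩` is a first integral: its derivative vanishes identically, hence it is constant. -/
theorem toyTop_l_first_integral
    (A C p s : ℝ) (hA : 0 < A) (hC : 0 < C) (hp : 0 < p) (hs : 0 < s)
    (ω r : ℝ → EuclideanSpace ℝ (Fin 3))
    (hω : Differentiable ℝ ω) (hr : Differentiable ℝ r)
    (hrnorm : ∀ t, ‖r t‖ = 1)
    (m DL : ℝ → EuclideanSpace ℝ (Fin 3))
    (hm : ∀ t, m t = A • ω t + ((C - A) * ⟪ω t, r t⟫) • r t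
        + (p * s * ⟪cross3 (r t) kvec, ω t⟫) • cross3 (r t) kvec)
    (hDL : ∀ t, DL t = ((C - A) * ⟪ω t, r t⟫) • cross3 (r t) (ω t)
        + (p * s * ⟪cross3 (r t) kvec, ω t⟫) • cross3 (r t) (cross3 kvec (ω t))
        + p • cross3 (r t) kvec)
    (hmdiff : Differentiable ℝ m)
    (heqm : ∀ t, deriv m t = cross3 (ω t) (m t) + DL t)
    (heqr : ∀ t, deriv r t = cross3 (ω t) (r t)) :
    (∀ t, deriv (fun t => ⟪m t, kvec⟫) t = 0) ∧
      ∀ t₁ t₂, ⟪m t₁, kvec⟫ = ⟪m t₂, kvec⟫ :=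
  toyTop_l_first_integral_general A C p s ω r m DL hm hDL hmdiff heqm
end

section
/- Converse realizability of the roots: for any real numbers e₁, e₂, e₃ with −1 ≤ e₁ ≤ e₂ ≤ 1 ≤ e₃, there exist real numbers l, n, h such that P(u) = (u − e₁)(u − e₂)(u − e₃) for all real u; i.e. the inequality −1 ≤ e₁ ≤ e₂ ≤ 1 ≤ e₃ is the only constraint on the roots. -/
/-!
Write `k = h - n²/(2C)`. The cubic is monic, and at `u = ±1` it takes the values
`-(l ∓ n)²/(2Ap)`; the ordering of the roots makes `(u - e₁)(u - e₂)(u - e₃)` nonpositive at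
`u = ±1`, so `l ∓ n` can be chosen as square roots. Matching the `u²`-coefficient then fixes `k`,
and two monic cubics agreeing at `±1` and in their `u²`-coefficient coincide.
-/

/-- The cubic of the statement, with `k` standing for `h - n² / (2C)`. -/
noncomputable def toyCubic (A p k l n u : ℝ) : ℝ :=
  1 / p * (1 - u ^ 2) * (k - p * u) - 1 / (2 * A * p) * (l - n * u) ^ 2

theorem toyCubic_eq_of_sq {A p k l n e₁ e₂ e₃ : ℝ} (hA : A ≠ 0) (hp : p ≠ 0)
    (h_minus : (l - n) ^ 2 = 2 * A * p * ((1 - e₁) * (1 - e₂) * (e₃ - 1)))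
    (h_plus : (l + n) ^ 2 = 2 * A * p * ((1 + e₁) * (1 + e₂) * (1 + e₃)))
    (hk : k = p * (e₁ + e₂ + e₃) - n ^ 2 / (2 * A)) (u : ℝ) :
    toyCubic A p k l n u = (u - e₁) * (u - e₂) * (u - e₃) := by
  subst hk
  unfold toyCubic
  field_simp
  linear_combination (-(u + 1) / 2) * h_minus + ((u - 1) / 2) * h_plus

theorem exists_sub_sq_eq_and_add_sq_eq {α β : ℝ} (hα : 0 ≤ α) (hβ : 0 ≤ β) :
    ∃ l n : ℝ, (l - n) ^ 2 = α ∧ (l + n) ^ 2 = β := by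
  refine ⟨(√α + √β) / 2, (√β - √α) / 2, ?_, ?_⟩
  · rw [show (√α + √β) / 2 - (√β - √α) / 2 = √α by ring, Real.sq_sqrt hα]
  · rw [show (√α + √β) / 2 + (√β - √α) / 2 = √β by ring, Real.sq_sqrt hβ]

theorem toyTop_roots_realizable_general
    (A C p : ℝ) (hA : 0 < A) (hp : 0 < p)
    (e₁ e₂ e₃ : ℝ) (h₁ : -1 ≤ e₁) (h₂ : e₁ ≤ e₂) (h₃ : e₂ ≤ 1) (h₄ : 1 ≤ e₃) :
    ∃ l n h : ℝ, ∀ u : ℝ,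
      1 / p * (1 - u ^ 2) * (h - n ^ 2 / (2 * C) - p * u)
          - 1 / (2 * A * p) * (l - n * u) ^ 2
        = (u - e₁) * (u - e₂) * (u - e₃) := by
  have hAp : 0 ≤ 2 * A * p := by positivity
  have h_minus : 0 ≤ 2 * A * p * ((1 - e₁) * (1 - e₂) * (e₃ - 1)) := by
    have : 0 ≤ 1 - e₁ := by linarith
    have : 0 ≤ 1 - e₂ := by linarith
    have : 0 ≤ e₃ - 1 := by linarith
    positivity
  have h_plus : 0 ≤ 2 * A * p * ((1 + e₁) * (1 + e₂) * (1 + e₃)) := by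
    have : 0 ≤ 1 + e₁ := by linarith
    have : 0 ≤ 1 + e₂ := by linarith
    have : 0 ≤ 1 + e₃ := by linarith
    positivity
  obtain ⟨l, n, hl_minus, hl_plus⟩ := exists_sub_sq_eq_and_add_sq_eq h_minus h_plus
  refine ⟨l, n, n ^ 2 / (2 * C) + (p * (e₁ + e₂ + e₃) - n ^ 2 / (2 * A)), fun u => ?_⟩
  rw [add_sub_cancel_left]
  exact toyCubic_eq_of_sq hA.ne' hp.ne' hl_minus hl_plus rfl u

/-- Converse realizability of the roots: any `e₁, e₂, e₃` with `-1 ≤ e₁ ≤ e₂ ≤ 1 ≤ e₃` arise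
as the roots of the cubic polynomial for suitable values of the first integrals `l, n, h`. -/
theorem toyTop_roots_realizable
    (A C p : ℝ) (hA : 0 < A) (hC : 0 < C) (hp : 0 < p)
    (e₁ e₂ e₃ : ℝ) (h₁ : -1 ≤ e₁) (h₂ : e₁ ≤ e₂) (h₃ : e₂ ≤ 1) (h₄ : 1 ≤ e₃) :
    ∃ l n h : ℝ, ∀ u : ℝ,
      1 / p * (1 - u ^ 2) * (h - n ^ 2 / (2 * C) - p * u)
          - 1 / (2 * A * p) * (l - n * u) ^ 2
        = (u - e₁) * (u - e₂) * (u - e₃) :=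
  toyTop_roots_realizable_general A C p hA hp e₁ e₂ e₃ h₁ h₂ h₃ h₄
end

section
/- If none of e₁, e₂, e₃ equals 1 or −1 and A ≠ C, then the values h(l,n) = n²/(2C) + l²/(2A) − p·e₁e₂e₃ taken at the two solutions (a, b) and (b, a) of the system in the previous context are different: h(a,b) ≠ h(b,a). In particular, the four solutions (a,b), (−a,−b), (b,a), (−b,−a) lead to exactly two distinct values of h. -/
/-- For `A ≠ C`, the two essentially different solutions `(a, b)` and `(b, a)` for `(l, n)`
lead to two different values of the energy `h`; together with `h(-l,-n) = h(l,n)` this shows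
that the four solutions lead to exactly two distinct values of `h`. -/
theorem toyTop_two_energy_values
    (A C p : ℝ) (hA : 0 < A) (hC : 0 < C) (hp : 0 < p) (hAC : A ≠ C)
    (e₁ e₂ e₃ : ℝ) (h₁ : -1 ≤ e₁) (h₂ : e₁ ≤ e₂) (h₃ : e₂ ≤ 1) (h₄ : 1 ≤ e₃)
    (he₁ : e₁ ≠ 1 ∧ e₁ ≠ -1) (he₂ : e₂ ≠ 1 ∧ e₂ ≠ -1) (he₃ : e₃ ≠ 1 ∧ e₃ ≠ -1)
    (a b : ℝ)
    (hab₁ : (a - b) ^ 2 = 2 * A * p * ((1 - e₁) * (1 - e₂) * (e₃ - 1)))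
    (hab₂ : (a + b) ^ 2 = 2 * A * p * ((1 + e₁) * (1 + e₂) * (1 + e₃)))
    (hval : ℝ → ℝ → ℝ)
    (hhval : ∀ l n, hval l n = n ^ 2 / (2 * C) + l ^ 2 / (2 * A) - p * (e₁ * e₂ * e₃)) :
    hval a b ≠ hval b a ∧
      hval (-a) (-b) = hval a b ∧ hval (-b) (-a) = hval b a := by
  have he1 : e₁ < 1 := lt_of_le_of_ne (h₂.trans h₃) he₁.1
  have he2 : e₂ < 1 := lt_of_le_of_ne h₃ he₂.1
  have he3 : 1 < e₃ := lt_of_le_of_ne h₄ (Ne.symm he₃.1)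
  have he1' : -1 < e₁ := lt_of_le_of_ne h₁ (Ne.symm he₁.2)
  have he2' : -1 < e₂ := lt_of_lt_of_le he1' h₂
  have hsub : a - b ≠ 0 := by
    intro h
    have h0 : (0:ℝ) = 2 * A * p * ((1 - e₁) * (1 - e₂) * (e₃ - 1)) := by
      rw [← hab₁, h]; ring
    have : (0:ℝ) < 2 * A * p * ((1 - e₁) * (1 - e₂) * (e₃ - 1)) := by
      apply mul_pos (by positivity)
      apply mul_pos (mul_pos (by linarith) (by linarith)) (by linarith)
    linarith
  have hadd : a + b ≠ 0 := by
    intro h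
    have h0 : (0:ℝ) = 2 * A * p * ((1 + e₁) * (1 + e₂) * (1 + e₃)) := by
      rw [← hab₂, h]; ring
    have : (0:ℝ) < 2 * A * p * ((1 + e₁) * (1 + e₂) * (1 + e₃)) := by
      apply mul_pos (by positivity)
      apply mul_pos (mul_pos (by linarith) (by linarith)) (by linarith)
    linarith
  refine ⟨?_, by rw [hhval, hhval]; ring_nf, by rw [hhval, hhval]; ring_nf⟩
  intro h
  rw [hhval, hhval] at h
  have hsq : a ^ 2 ≠ b ^ 2 := by
    intro h'
    have : (a - b) * (a + b) = 0 := by ring_nf; nlinarith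
    rcases mul_eq_zero.1 this with h'' | h'' <;> [exact hsub h''; exact hadd h'']
  have hAne : (2 * A : ℝ) ≠ 0 := by positivity
  have hCne : (2 * C : ℝ) ≠ 0 := by positivity
  have : (b ^ 2 - a ^ 2) * (2 * A - 2 * C) = 0 := by
    field_simp at h
    nlinarith [h]
  rcases mul_eq_zero.1 this with h'' | h''
  · exact hsq (by linarith)
  · exact hAC (by linarith)
end

section
/- Angular speed of the tip curve: let Φ(t) = [[α, β], [−conj(β), conj(α)]] be a differentiable SU(2)-valued curve (so αδ − βγ ≡ 1 with δ = conj(α), γ = −conj(β)), and define u = αδ + βγ = |α|² − |β|², iω₃ = 2(α′δ − β′γ), iΩ₃ = 2(δα′ − βγ′). Then ω₃ and Ω₃ are real-valued, and at every time t where α(t)β(t) ≠ 0 and u(t)² ≠ 1, the argument φ of the tip curve c = 2sαβ satisfies φ′ = Im((αβ)′/(αβ)) = (Ω₃ + ω₃)/(2(u + 1)) + (Ω₃ − ω₃)/(2(u − 1)). -/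
open Complex

/-- Angular speed of the tip curve of the toy top: `ω₃` and `Ω₃` are real-valued, and wherever
`αβ ≠ 0` and `u² ≠ 1`, the argument `φ` of the tip curve `c = 2sαβ` satisfies
`φ' = Im((αβ)'/(αβ)) = (Ω₃ + ω₃)/(2(u+1)) + (Ω₃ - ω₃)/(2(u-1))`. -/
theorem toyTop_tip_angular_speed
    (α β γ δ : ℝ → ℂ)
    (hα : Differentiable ℝ α) (hβ : Differentiable ℝ β)
    (hδ : ∀ t, δ t = starRingEnd ℂ (α t)) (hγ : ∀ t, γ t = -starRingEnd ℂ (β t))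
    (hdet : ∀ t, α t * δ t - β t * γ t = 1)
    (u ω₃ Ω₃ : ℝ → ℂ)
    (hu : ∀ t, u t = α t * δ t + β t * γ t)
    (hω₃ : ∀ t, Complex.I * ω₃ t = 2 * (deriv α t * δ t - deriv β t * γ t))
    (hΩ₃ : ∀ t, Complex.I * Ω₃ t = 2 * (δ t * deriv α t - β t * deriv γ t))
    (s : ℝ) (hs : 0 < s)
    (c : ℝ → ℂ) (hc : ∀ t, c t = 2 * s * (α t * β t))
    (φ : ℝ → ℝ) (hφ : ∀ t, c t ≠ 0 → deriv φ t = (deriv c t / c t).im) :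
    (∀ t, (ω₃ t).im = 0 ∧ (Ω₃ t).im = 0) ∧
      ∀ t, α t * β t ≠ 0 → (u t) ^ 2 ≠ 1 →
        deriv φ t = (deriv (fun t => α t * β t) t / (α t * β t)).im ∧
        Complex.ofReal (deriv φ t)
          = (Ω₃ t + ω₃ t) / (2 * (u t + 1)) + (Ω₃ t - ω₃ t) / (2 * (u t - 1)) := by
  have hδf : δ = fun t => starRingEnd ℂ (α t) := funext hδ
  have hγf : γ = fun t => -starRingEnd ℂ (β t) := funext hγ
  have hδ' : ∀ t, HasDerivAt δ (starRingEnd ℂ (deriv α t)) t := by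
    intro t
    rw [hδf]
    exact ((hα t).hasDerivAt).star
  have hγ' : ∀ t, HasDerivAt γ (-(starRingEnd ℂ (deriv β t))) t := by
    intro t
    rw [hγf]
    exact (((hβ t).hasDerivAt).star).neg
  -- derivative of the determinant constraint
  have hE : ∀ t, deriv α t * starRingEnd ℂ (α t) + α t * starRingEnd ℂ (deriv α t)
      + (deriv β t * starRingEnd ℂ (β t) + β t * starRingEnd ℂ (deriv β t)) = 0 := by
    intro t
    have h1 : HasDerivAt (fun t => α t * δ t - β t * γ t)
        (deriv α t * δ t + α t * starRingEnd ℂ (deriv α t)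
          - (deriv β t * γ t + β t * (-(starRingEnd ℂ (deriv β t))))) t :=
      ((hα t).hasDerivAt.mul (hδ' t)).sub ((hβ t).hasDerivAt.mul (hγ' t))
    have h2 : (fun t => α t * δ t - β t * γ t) = fun _ => (1:ℂ) := funext hdet
    rw [h2] at h1
    have h3 := h1.unique (hasDerivAt_const _ _)
    rw [hδ t, hγ t] at h3
    linear_combination h3
  -- explicit values of ω₃ and Ω₃
  have hωv : ∀ t, ω₃ t = -Complex.I *
      (2 * (deriv α t * starRingEnd ℂ (α t) + deriv β t * starRingEnd ℂ (β t))) := by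
    intro t
    have h := hω₃ t
    rw [hδ t, hγ t] at h
    linear_combination (-Complex.I) * h + ω₃ t * Complex.I_sq
  have hΩv : ∀ t, Ω₃ t = -Complex.I *
      (2 * (starRingEnd ℂ (α t) * deriv α t + β t * starRingEnd ℂ (deriv β t))) := by
    intro t
    have h := hΩ₃ t
    rw [hδ t, (hγ' t).deriv] at h
    linear_combination (-Complex.I) * h + Ω₃ t * Complex.I_sq
  have hreal : ∀ t, (ω₃ t).im = 0 ∧ (Ω₃ t).im = 0 := by
    intro t
    have hE' := hE t
    have h1 := congrArg Complex.im (hωv t)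
    have h2 := congrArg Complex.im (hΩv t)
    have h3 := congrArg Complex.re hE'
    have h4 := congrArg Complex.im hE'
    simp [Complex.add_re, Complex.add_im, Complex.mul_re, Complex.mul_im] at h1 h2 h3 h4
    constructor <;> [rw [h1]; rw [h2]] <;> ring_nf <;> ring_nf at h3 h4 <;> linarith
  refine ⟨hreal, ?_⟩
  intro t hab hu2
  have ha : α t ≠ 0 := fun h => hab (by rw [h]; ring)
  have hb : β t ≠ 0 := fun h => hab (by rw [h]; ring)
  have hca : starRingEnd ℂ (α t) ≠ 0 := by simpa using ha
  have hcb : starRingEnd ℂ (β t) ≠ 0 := by simpa using hb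
  have hup : u t + 1 ≠ 0 := by
    intro h
    exact hu2 (by rw [show u t = -1 from by linear_combination h]; ring)
  have hum : u t - 1 ≠ 0 := by
    intro h
    exact hu2 (by rw [show u t = 1 from by linear_combination h]; ring)
  have hdt := hdet t
  rw [hδ t, hγ t] at hdt
  have hu1 : u t + 1 = 2 * (α t * starRingEnd ℂ (α t)) := by
    rw [hu t, hδ t, hγ t]; linear_combination -hdt
  have hu1' : u t - 1 = -(2 * (β t * starRingEnd ℂ (β t))) := by
    rw [hu t, hδ t, hγ t]; linear_combination hdt
  have h2s : (2 * (s:ℂ)) ≠ 0 :=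
    mul_ne_zero two_ne_zero (Complex.ofReal_ne_zero.2 hs.ne')
  have hc0 : c t ≠ 0 := by rw [hc t]; exact mul_ne_zero h2s hab
  have hD : HasDerivAt (fun t => α t * β t) (deriv α t * β t + α t * deriv β t) t :=
    (hα t).hasDerivAt.mul (hβ t).hasDerivAt
  have hcD : HasDerivAt c (2 * (s:ℂ) * (deriv α t * β t + α t * deriv β t)) t := by
    rw [funext hc]; exact hD.const_mul _
  have hφ1 : deriv φ t = (deriv (fun t => α t * β t) t / (α t * β t)).im := by
    rw [hφ t hc0, hcD.deriv, hc t, hD.deriv, mul_div_mul_left _ _ h2s]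
  refine ⟨hφ1, ?_⟩
  rw [hφ1, hD.deriv]
  set z : ℂ := (deriv α t * β t + α t * deriv β t) / (α t * β t) with hz
  have him : (z.im : ℂ) = -Complex.I / 2 * (z - starRingEnd ℂ z) := by
    rw [Complex.sub_conj]
    push_cast
    linear_combination (z.im : ℂ) * Complex.I_sq
  rw [him, hz]
  have hconj : starRingEnd ℂ ((deriv α t * β t + α t * deriv β t) / (α t * β t))
      = (starRingEnd ℂ (deriv α t) * starRingEnd ℂ (β t)
          + starRingEnd ℂ (α t) * starRingEnd ℂ (deriv β t))
        / (starRingEnd ℂ (α t) * starRingEnd ℂ (β t)) := by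
    simp [map_div₀]
  rw [hconj, hωv t, hΩv t, hu1, hu1']
  have hcA' : starRingEnd ℂ (deriv α t) =
      -(deriv α t * starRingEnd ℂ (α t) + deriv β t * starRingEnd ℂ (β t)
          + β t * starRingEnd ℂ (deriv β t)) / α t := by
    rw [eq_div_iff ha]
    linear_combination hE t
  rw [hcA']
  have key : (deriv α t * β t + α t * deriv β t) / (α t * β t)
      - (-(deriv α t * starRingEnd ℂ (α t) + deriv β t * starRingEnd ℂ (β t)
            + β t * starRingEnd ℂ (deriv β t)) / α t * starRingEnd ℂ (β t)
          + starRingEnd ℂ (α t) * starRingEnd ℂ (deriv β t))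
        / (starRingEnd ℂ (α t) * starRingEnd ℂ (β t))
      = (2 * ((starRingEnd ℂ (α t) * deriv α t + β t * starRingEnd ℂ (deriv β t)))
          + 2 * (deriv α t * starRingEnd ℂ (α t) + deriv β t * starRingEnd ℂ (β t)))
          / (2 * (α t * starRingEnd ℂ (α t)))
        + (2 * ((starRingEnd ℂ (α t) * deriv α t + β t * starRingEnd ℂ (deriv β t)))
            - 2 * (deriv α t * starRingEnd ℂ (α t) + deriv β t * starRingEnd ℂ (β t)))
          / (-(2 * (β t * starRingEnd ℂ (β t)))) := by
    field_simp
    ring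
  linear_combination (-Complex.I / 2) * key
end

section
/- No loops or cusps when the signs agree: if w₊·w₋ > 0, then there is no u ∈ (−1, 1) satisfying (u + 1)/(u − 1) = w₋/w₊; consequently the function u ↦ w₋/(u + 1) − w₊/(u − 1) has no zero in (−1, 1), and the trajectory of the top's tip has neither loops nor cusps. -/
/-- No loops or cusps when `wp` and `wm` have the same sign: the equation
`(u+1)/(u-1) = wm/wp` has no solution in `(-1, 1)` and the function
`u ↦ wm/(u+1) - wp/(u-1)` has no zero in `(-1, 1)`. -/
theorem toyTop_no_loops_same_sign
    (e₁ e₂ e₃ e₄ : ℝ)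
    (h₁ : -1 < e₁) (h₂ : e₁ ≤ e₂) (h₃ : e₂ < 1) (h₄ : 1 ≤ e₃) (h₅ : 1 < e₄)
    (R : ℝ → ℝ)
    (hR : ∀ u, R u = (u - e₁) * (u - e₂) * (u - e₃) * (u ^ 2 - e₄ ^ 2))
    (wp wm : ℝ) (hwp : wp ^ 2 = R 1) (hwm : wm ^ 2 = R (-1))
    (hsign : 0 < wp * wm) :
    (¬ ∃ u ∈ Set.Ioo (-1 : ℝ) 1, (u + 1) / (u - 1) = wm / wp) ∧
      ∀ u ∈ Set.Ioo (-1 : ℝ) 1, wm / (u + 1) - wp / (u - 1) ≠ 0 := by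
  constructor
  · rintro ⟨u, ⟨hu1, hu2⟩, heq⟩
    have h1 : (u + 1) / (u - 1) < 0 :=
      div_neg_of_pos_of_neg (by linarith) (by linarith)
    have h2 : 0 < wm / wp := by
      rcases mul_pos_iff.mp hsign with ⟨a, b⟩ | ⟨a, b⟩
      · exact div_pos b a
      · exact div_pos_of_neg_of_neg b a
    rw [heq] at h1
    linarith
  · rintro u ⟨hu1, hu2⟩ heq
    have hup : (0:ℝ) < u + 1 := by linarith
    have hum : u - 1 < 0 := by linarith
    rcases mul_pos_iff.mp hsign with ⟨a, b⟩ | ⟨a, b⟩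
    · have c := div_pos b hup
      have d := div_neg_of_pos_of_neg a hum
      linarith
    · have c := div_neg_of_neg_of_pos b hup
      have d := div_pos_of_neg_of_neg a hum
      linarith
end

section
/- Loop criterion: assume −1 < e₁ < e₂ < 1 < e₃, and that w₊ ≠ 0, w₋ ≠ 0 have opposite signs (w₊·w₋ < 0). Then there exists u ∈ (e₁, e₂) with w₋/(u + 1) − w₊/(u − 1) = 0 (equivalently (u + 1)/(u − 1) = w₋/w₊) if and only if (1 − e₁e₂)/(e₂ − e₁) < e₃. In this case the trajectory of the top's tip has loops. -/
set_option maxHeartbeats 1000000 in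
/-- Loop criterion: when `w₊` and `w₋` have opposite signs, the trajectory of the top's tip
has loops (i.e. `w₋/(u+1) - w₊/(u-1)` vanishes for some `u ∈ (e₁, e₂)`) if and only if
`(1 - e₁e₂)/(e₂ - e₁) < e₃`. -/
theorem toyTop_loop_criterion
    (e₁ e₂ e₃ e₄ : ℝ)
    (h₁ : -1 < e₁) (h₂ : e₁ < e₂) (h₃ : e₂ < 1) (h₄ : 1 < e₃) (h₅ : 1 < e₄)
    (R : ℝ → ℝ)
    (hR : ∀ u, R u = (u - e₁) * (u - e₂) * (u - e₃) * (u ^ 2 - e₄ ^ 2))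
    (wp wm : ℝ) (hwp : wp ^ 2 = R 1) (hwm : wm ^ 2 = R (-1))
    (hwp0 : wp ≠ 0) (hwm0 : wm ≠ 0) (hsign : wp * wm < 0) :
    (∃ u ∈ Set.Ioo e₁ e₂,
        wm / (u + 1) - wp / (u - 1) = 0 ∧ (u + 1) / (u - 1) = wm / wp)
      ↔ (1 - e₁ * e₂) / (e₂ - e₁) < e₃ := by
  have he21 : (0:ℝ) < e₂ - e₁ := by linarith
  have hwp2 : 0 < wp^2 := by positivity
  have hwm2 : 0 < wm^2 := by positivity
  have he4 : (0:ℝ) < e₄^2 - 1 := by nlinarith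
  have h1e₁ : (0:ℝ) < 1 - e₁^2 := by nlinarith
  have h1e₂ : (0:ℝ) < 1 - e₂^2 := by nlinarith
  have hP : (0:ℝ) < (1-e₁*e₂) + e₃*(e₂-e₁) := by
    have t1 := mul_pos (show (0:ℝ) < 1-e₁ by linarith) (show (0:ℝ) < 1+e₂ by linarith)
    have t2 := mul_pos (show (0:ℝ) < 1+e₁ by linarith) (show (0:ℝ) < 1-e₂ by linarith)
    have t3 := mul_pos (show (0:ℝ) < e₃ by linarith) he21
    have tid : (1-e₁)*(1+e₂) + (1+e₁)*(1-e₂) = 2*(1-e₁*e₂) := by ring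
    linarith
  have hid1 : wm^2*(1-e₁)^2 - wp^2*(1+e₁)^2
      = 2*(e₄^2-1)*(1-e₁^2)*((1-e₁*e₂) + e₃*(e₂-e₁)) := by
    rw [hwm, hwp, hR 1, hR (-1)]; ring
  have hid2 : wm^2*(1-e₂)^2 - wp^2*(1+e₂)^2
      = 2*(e₄^2-1)*(1-e₂^2)*((1-e₁*e₂) - e₃*(e₂-e₁)) := by
    rw [hwm, hwp, hR 1, hR (-1)]; ring
  have hF1 : wp^2*(1+e₁)^2 < wm^2*(1-e₁)^2 := by
    have h := mul_pos (mul_pos (mul_pos two_pos he4) h1e₁) hP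
    linarith
  constructor
  · rintro ⟨u, ⟨hu1, hu2⟩, heq1, heq2⟩
    have hum : -1 < u := by linarith
    have hup : u < 1 := by linarith
    have hd1 : u - 1 ≠ 0 := by intro h; linarith
    have hcross : (u+1)*wp = wm*(u-1) := (div_eq_div_iff hd1 hwp0).mp heq2
    have hsq : ((u+1)*wp)^2 = (wm*(u-1))^2 := by rw [hcross]
    have hue : (0:ℝ) < 1 - u*e₂ := by
      have a := mul_pos (show (0:ℝ) < 1-u by linarith) (show (0:ℝ) < 1+e₂ by linarith)
      have b := mul_pos (show (0:ℝ) < 1+u by linarith) (show (0:ℝ) < 1-e₂ by linarith)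
      have c : (1-u)*(1+e₂) + (1+u)*(1-e₂) = 2*(1-u*e₂) := by ring
      linarith
    have key : wp^2*(1+e₂)^2*(u-1)^2 - wm^2*(1-e₂)^2*(u-1)^2
        = 4*(wp^2*((e₂-u)*(1-u*e₂))) := by
      linear_combination ((1-e₂)^2) * hsq
    have hpos : 0 < wp^2*((e₂-u)*(1-u*e₂)) :=
      mul_pos hwp2 (mul_pos (by linarith : (0:ℝ) < e₂ - u) hue)
    have hu2pos : (0:ℝ) < (u-1)^2 := by positivity
    have hF2 : wm^2*(1-e₂)^2 < wp^2*(1+e₂)^2 := by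
      have h2 : wm^2*(1-e₂)^2*(u-1)^2 < wp^2*(1+e₂)^2*(u-1)^2 := by linarith
      exact lt_of_mul_lt_mul_right (by linarith) (le_of_lt hu2pos)
    have hD : (1-e₁*e₂) - e₃*(e₂-e₁) < 0 := by
      by_contra h
      push_neg at h
      have := mul_nonneg (le_of_lt (mul_pos (mul_pos two_pos he4) h1e₂)) h
      linarith
    rw [div_lt_iff₀ he21]; linarith
  · intro hC
    rw [div_lt_iff₀ he21] at hC
    have hD : (1-e₁*e₂) - e₃*(e₂-e₁) < 0 := by linarith
    have hF2 : wm^2*(1-e₂)^2 < wp^2*(1+e₂)^2 := by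
      have h := mul_neg_of_pos_of_neg (mul_pos (mul_pos two_pos he4) h1e₂) hD
      linarith
    have hne : wm - wp ≠ 0 := by
      intro h
      have hw : wm = wp := by linarith
      rw [hw] at hsign
      nlinarith [sq_nonneg wp]
    refine ⟨(wm+wp)/(wm-wp), ⟨?_, ?_⟩, ?_, ?_⟩
    · -- e₁ < u
      have key : (wm+wp)/(wm-wp) - e₁ = (wm*(1-e₁)+wp*(1+e₁))/(wm-wp) := by
        field_simp; ring
      rcases lt_or_gt_of_ne hwp0 with hwpneg | hwppos
      · have hwmpos : 0 < wm := by
          rcases lt_trichotomy wm 0 with h|h|h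
          · have := mul_pos_of_neg_of_neg hwpneg h; linarith
          · exact absurd h hwm0
          · exact h
        have hnum : 0 < wm*(1-e₁)+wp*(1+e₁) := by
          have a : 0 < -wp*(1+e₁) :=
            mul_pos (by linarith) (by linarith)
          have b : 0 < wm*(1-e₁) := mul_pos hwmpos (by linarith)
          have c : (wm*(1-e₁) - (-wp*(1+e₁))) * (wm*(1-e₁) + (-wp*(1+e₁)))
              = wm^2*(1-e₁)^2 - wp^2*(1+e₁)^2 := by ring
          nlinarith [hF1, a, b, c]
        have hden : 0 < wm - wp := by linarith
        have := div_pos hnum hden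
        linarith [key ▸ this]
      · have hwmneg : wm < 0 := by
          rcases lt_trichotomy wm 0 with h|h|h
          · exact h
          · exact absurd h hwm0
          · have := mul_pos hwppos h; linarith
        have hnum : wm*(1-e₁)+wp*(1+e₁) < 0 := by
          have a : 0 < wp*(1+e₁) := mul_pos hwppos (by linarith)
          have b : 0 < -wm*(1-e₁) := mul_pos (by linarith) (by linarith)
          have c : (-wm*(1-e₁) - wp*(1+e₁)) * (-wm*(1-e₁) + wp*(1+e₁))
              = wm^2*(1-e₁)^2 - wp^2*(1+e₁)^2 := by ring
          nlinarith [hF1, a, b, c]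
        have hden : wm - wp < 0 := by linarith
        have := div_pos_of_neg_of_neg hnum hden
        linarith [key ▸ this]
    · -- u < e₂
      have key : (wm+wp)/(wm-wp) - e₂ = (wm*(1-e₂)+wp*(1+e₂))/(wm-wp) := by
        field_simp; ring
      rcases lt_or_gt_of_ne hwp0 with hwpneg | hwppos
      · have hwmpos : 0 < wm := by
          rcases lt_trichotomy wm 0 with h|h|h
          · have := mul_pos_of_neg_of_neg hwpneg h; linarith
          · exact absurd h hwm0
          · exact h
        have hnum : wm*(1-e₂)+wp*(1+e₂) < 0 := by
          have a : 0 < wm*(1-e₂) := mul_pos hwmpos (by linarith)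
          have b : 0 < -wp*(1+e₂) := mul_pos (by linarith) (by linarith)
          have c : (-wp*(1+e₂) - wm*(1-e₂)) * (-wp*(1+e₂) + wm*(1-e₂))
              = wp^2*(1+e₂)^2 - wm^2*(1-e₂)^2 := by ring
          nlinarith [hF2, a, b, c]
        have hden : 0 < wm - wp := by linarith
        have := div_neg_of_neg_of_pos hnum hden
        linarith [key ▸ this]
      · have hwmneg : wm < 0 := by
          rcases lt_trichotomy wm 0 with h|h|h
          · exact h
          · exact absurd h hwm0
          · have := mul_pos hwppos h; linarith
        have hnum : 0 < wm*(1-e₂)+wp*(1+e₂) := by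
          have a : 0 < -wm*(1-e₂) := mul_pos (by linarith) (by linarith)
          have b : 0 < wp*(1+e₂) := mul_pos hwppos (by linarith)
          have c : (wp*(1+e₂) - (-wm*(1-e₂))) * (wp*(1+e₂) + (-wm*(1-e₂)))
              = wp^2*(1+e₂)^2 - wm^2*(1-e₂)^2 := by ring
          nlinarith [hF2, a, b, c]
        have hden : wm - wp < 0 := by linarith
        have := div_neg_of_pos_of_neg hnum hden
        linarith [key ▸ this]
    · -- equation 1
      have hup : (wm+wp)/(wm-wp) + 1 = 2*wm/(wm-wp) := by field_simp; ring
      have hum : (wm+wp)/(wm-wp) - 1 = 2*wp/(wm-wp) := by field_simp; ring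
      rw [hup, hum]
      rw [div_div_eq_mul_div, div_div_eq_mul_div]
      field_simp
      ring
    · -- equation 2
      have hup : (wm+wp)/(wm-wp) + 1 = 2*wm/(wm-wp) := by field_simp; ring
      have hum : (wm+wp)/(wm-wp) - 1 = 2*wp/(wm-wp) := by field_simp; ring
      rw [hup, hum]
      rw [div_div_div_eq]
      field_simp
end

section
/- Cusp criterion: assume −1 < e₁ < e₂ < 1 < e₃, that w₊ ≠ 0, w₋ ≠ 0 have opposite signs (w₊·w₋ < 0), and that (1 − e₁e₂)/(e₂ − e₁) = e₃. Then the zero of u ↦ w₋/(u + 1) − w₊/(u − 1) occurs exactly at the endpoint u = e₂, i.e. (e₂ + 1)/(e₂ − 1) = w₋/w₊; the trajectory of the top's tip then has cusps. -/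
/-- Cusp criterion: when `w₊` and `w₋` have opposite signs and
`(1 - e₁e₂)/(e₂ - e₁) = e₃`, the zero of `u ↦ w₋/(u+1) - w₊/(u-1)` occurs exactly at the
endpoint `u = e₂`, i.e. `(e₂+1)/(e₂-1) = w₋/w₊`; the tip trajectory then has cusps. -/
theorem toyTop_cusp_criterion
    (e₁ e₂ e₃ e₄ : ℝ)
    (h₁ : -1 < e₁) (h₂ : e₁ < e₂) (h₃ : e₂ < 1) (h₄ : 1 < e₃) (h₅ : 1 < e₄)
    (R : ℝ → ℝ)
    (hR : ∀ u, R u = (u - e₁) * (u - e₂) * (u - e₃) * (u ^ 2 - e₄ ^ 2))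
    (wp wm : ℝ) (hwp : wp ^ 2 = R 1) (hwm : wm ^ 2 = R (-1))
    (hwp0 : wp ≠ 0) (hwm0 : wm ≠ 0) (hsign : wp * wm < 0)
    (hcusp : (1 - e₁ * e₂) / (e₂ - e₁) = e₃) :
    (e₂ + 1) / (e₂ - 1) = wm / wp ∧
      wm / (e₂ + 1) - wp / (e₂ - 1) = 0 ∧
      ∀ u ∈ Set.Icc e₁ e₂, wm / (u + 1) - wp / (u - 1) = 0 → u = e₂ := by
  have hd : e₂ - e₁ ≠ 0 := by linarith
  have he3 : e₃ = (1 - e₁ * e₂) / (e₂ - e₁) := hcusp.symm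
  have hm1 : -1 < e₂ := by linarith
  have hp1ne : e₂ + 1 ≠ 0 := by linarith
  have hm1ne : e₂ - 1 ≠ 0 := by linarith
  -- key squared identity
  have hsq : (wm * (e₂ - 1)) ^ 2 = (wp * (e₂ + 1)) ^ 2 := by
    have h1 : wp ^ 2 = (1 - e₁) * (1 - e₂) * (1 - e₃) * (1 ^ 2 - e₄ ^ 2) := by
      rw [hwp, hR]
    have h2 : wm ^ 2 = (-1 - e₁) * (-1 - e₂) * (-1 - e₃) * ((-1) ^ 2 - e₄ ^ 2) := by
      rw [hwm, hR]
    rw [he3] at h1 h2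
    field_simp at h1 h2
    have hz : ((wm * (e₂ - 1)) ^ 2 - (wp * (e₂ + 1)) ^ 2) * (e₂ - e₁) = 0 := by
      linear_combination (e₂ - 1) ^ 2 * h2 - (e₂ + 1) ^ 2 * h1
    rcases mul_eq_zero.mp hz with h | h
    · linarith
    · exact absurd h hd
  -- signs: both wm*(e₂-1) and wp*(e₂+1) — their product is positive
  have hprod : 0 < (wm * (e₂ - 1)) * (wp * (e₂ + 1)) := by
    have : (wm * (e₂ - 1)) * (wp * (e₂ + 1)) = (wp * wm) * ((e₂ - 1) * (e₂ + 1)) := by ring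
    rw [this]
    have hneg : (e₂ - 1) * (e₂ + 1) < 0 := mul_neg_of_neg_of_pos (by linarith) (by linarith)
    exact mul_pos_of_neg_of_neg hsign hneg
  have heq : wm * (e₂ - 1) = wp * (e₂ + 1) := by
    have hz : (wm * (e₂ - 1) - wp * (e₂ + 1)) * (wm * (e₂ - 1) + wp * (e₂ + 1)) = 0 := by
      linear_combination hsq
    rcases mul_eq_zero.mp hz with h | h
    · linarith
    · exfalso
      have : wm * (e₂ - 1) = -(wp * (e₂ + 1)) := by linarith
      nlinarith
  have key : (e₂ + 1) / (e₂ - 1) = wm / wp := by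
    field_simp
    linarith [heq]
  refine ⟨key, ?_, ?_⟩
  · field_simp
    linarith [heq]
  · rintro u ⟨hu1, hu2⟩ hzero
    have hup : u + 1 ≠ 0 := by nlinarith
    have hum : u - 1 ≠ 0 := by nlinarith
    have h' : wm * (u - 1) = wp * (u + 1) := by
      field_simp at hzero; linarith
    -- subtract: (u - e₂)*(wm - wp) = 0
    have hdiff : (u - e₂) * (wm - wp) = 0 := by nlinarith [heq, h']
    have hwmp : wm - wp ≠ 0 := by
      intro h
      have : wm = wp := by linarith
      rw [this] at hsign
      nlinarith
    have := mul_eq_zero.mp hdiff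
    rcases this with h | h
    · linarith
    · exact absurd h hwmp
end
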